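/- Idempotent powers in a block product over an aperiodic monoid: let M be an aperiodic monoid (for every x ∈ M there exists n with x^n = x^{n+1}), let N be a monoid, let (m', f') ∈ M □ N and let k ≥ 1 be such that (m, f) := (m', f')^k is idempotent in M □ N. Then m = (m')^k is an idempotent of M, and for all p, q ∈ M one has f (p * m, m * q) = (f' (p * m, m * q))^k, and this element is an idempotent of N. -/

import Mathlib

/-- The carrier of the block product `M □ N`: pairs of an element of `M` and a
function `M × M → N`. -/
structure BlockProd (M : Type*) (N : Type*) where
  fst : M
  snd : M × M → N

namespace BlockProd

variable {M N : Type*} [Monoid M] [Monoid N]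

/-- The block product multiplication:
`(m, f) * (m', f') = (m * m', fun (p, q) => f (p, m' * q) * f' (p * m, q))`. -/
def bmul (a b : BlockProd M N) : BlockProd M N :=
  ⟨a.fst * b.fst, fun pq => a.snd (pq.1, b.fst * pq.2) * b.snd (pq.1 * a.fst, pq.2)⟩

/-- The block product monoid structure, with identity `(1, fun _ => 1)`. -/
instance : Monoid (BlockProd M N) where
  mul := bmul
  one := ⟨1, fun _ => 1⟩
  mul_assoc a b c := by
    show bmul (bmul a b) c = bmul a (bmul b c)
    simp only [bmul]
    congr 1
    · exact mul_assoc _ _ _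
    · funext pq
      simp [mul_assoc]
  one_mul a := by
    show bmul ⟨1, fun _ => 1⟩ a = a
    obtain ⟨a1, a2⟩ := a
    simp only [bmul]
    congr 1
    · exact one_mul _
    · funext pq
      simp
  mul_one a := by
    show bmul a ⟨1, fun _ => 1⟩ = a
    obtain ⟨a1, a2⟩ := a
    simp only [bmul]
    congr 1
    · exact mul_one _
    · funext pq
      simp

end BlockProd

/-!
Aperiodicity makes `m = m' ^ k` absorb `m'` on both sides. At arguments `(p * m, m * q)` the
twisting in the block product multiplication therefore disappears, so there the second
component of `(m', f') ^ k` is the plain power `f' (p * m, m * q) ^ k`, and the idempotence of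
`(m, f)` evaluated at that point becomes the idempotence of this power.
-/

theorem pow_succ_eq_of_le {M : Type*} [Monoid M] {x : M} {n j : ℕ}
    (hn : x ^ n = x ^ (n + 1)) (hj : n ≤ j) : x ^ (j + 1) = x ^ j := by
  induction j, hj using Nat.le_induction with
  | base => exact hn.symm
  | succ j _ ih => rw [pow_succ, ih, ← pow_succ, ih]

theorem pow_succ_eq_of_isIdempotentElem_pow {M : Type*} [Monoid M] {x : M} {n k : ℕ}
    (hn : x ^ n = x ^ (n + 1)) (hk : k ≠ 0) (hidem : IsIdempotentElem (x ^ k)) :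
    x ^ (k + 1) = x ^ k := by
  have hstable : x ^ (k * (n + 1)) = x ^ k := by
    rw [pow_mul, hidem.pow_succ_eq]
  have hle : n ≤ k * (n + 1) := by nlinarith [Nat.one_le_iff_ne_zero.mpr hk]
  calc x ^ (k + 1) = x ^ (k * (n + 1) + 1) := by rw [pow_succ, pow_succ, hstable]
    _ = x ^ (k * (n + 1)) := pow_succ_eq_of_le hn hle
    _ = x ^ k := hstable

theorem mul_pow_eq_self_of_mul_eq_self {M : Type*} [Monoid M] {p x : M}
    (h : p * x = p) (j : ℕ) : p * x ^ j = p := by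
  induction j with
  | zero => rw [pow_zero, mul_one]
  | succ j ih => rw [pow_succ, ← mul_assoc, ih, h]

namespace BlockProd

variable {M N : Type*} [Monoid M] [Monoid N]

@[simp]
theorem mul_fst (a b : BlockProd M N) : (a * b).fst = a.fst * b.fst := rfl

@[simp]
theorem mul_snd (a b : BlockProd M N) (p q : M) :
    (a * b).snd (p, q) = a.snd (p, b.fst * q) * b.snd (p * a.fst, q) := rfl

theorem pow_fst (a : BlockProd M N) (k : ℕ) : (a ^ k).fst = a.fst ^ k := by
  induction k with
  | zero => rw [pow_zero, pow_zero]; rfl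
  | succ k ih => rw [pow_succ, pow_succ, mul_fst, ih]

theorem pow_snd_of_mul_fst_eq {a : BlockProd M N} {p q : M}
    (hp : p * a.fst = p) (hq : a.fst * q = q) (j : ℕ) :
    (a ^ j).snd (p, q) = a.snd (p, q) ^ j := by
  induction j with
  | zero => rw [pow_zero, pow_zero]; rfl
  | succ j ih =>
    rw [pow_succ, mul_snd, hq, ih, pow_fst, mul_pow_eq_self_of_mul_eq_self hp, pow_succ]

theorem isIdempotentElem_fst {e : BlockProd M N} (h : IsIdempotentElem e) :
    IsIdempotentElem e.fst :=
  congrArg BlockProd.fst h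

theorem isIdempotentElem_snd_apply {e : BlockProd M N} (h : IsIdempotentElem e) {p q : M}
    (hp : p * e.fst = p) (hq : e.fst * q = q) :
    IsIdempotentElem (e.snd (p, q)) := by
  have h_at := congrFun (congrArg BlockProd.snd h) (p, q)
  rwa [mul_snd, hp, hq] at h_at

end BlockProd

/-- Idempotent powers in a block product over an aperiodic monoid `M`: if
`(m, f) = (m', f')^k` is idempotent with `k ≥ 1`, then `m = m'^k` is an idempotent of
`M`, and `f (p * m, m * q) = (f' (p * m, m * q))^k` for all `p q : M`, this element
being an idempotent of `N`. -/
theorem blockProd_idempotent_pow {M N : Type*} [Monoid M] [Monoid N]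
    (hM : ∀ x : M, ∃ n : ℕ, x ^ n = x ^ (n + 1))
    (m' : M) (f' : M × M → N) (k : ℕ) (hk : 1 ≤ k) (m : M) (f : M × M → N)
    (hpow : BlockProd.mk m f = BlockProd.mk m' f' ^ k)
    (hidem : BlockProd.mk m f * BlockProd.mk m f = BlockProd.mk m f) :
    (m = m' ^ k ∧ m * m = m) ∧
      ∀ p q : M, f (p * m, m * q) = f' (p * m, m * q) ^ k ∧
        f' (p * m, m * q) ^ k * f' (p * m, m * q) ^ k = f' (p * m, m * q) ^ k := by
  have hm : m = m' ^ k := by simpa [BlockProd.pow_fst] using congrArg BlockProd.fst hpow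
  have hf : f = (BlockProd.mk m' f' ^ k).snd := congrArg BlockProd.snd hpow
  have hm_idem : IsIdempotentElem m := BlockProd.isIdempotentElem_fst hidem
  obtain ⟨n, hn⟩ := hM m'
  have hm_succ : m' ^ (k + 1) = m' ^ k :=
    pow_succ_eq_of_isIdempotentElem_pow hn (by omega) (hm ▸ hm_idem)
  refine ⟨⟨hm, hm_idem⟩, fun p q => ?_⟩
  have hp : p * m * m' = p * m := by rw [mul_assoc, hm, ← pow_succ, hm_succ]
  have hq : m' * (m * q) = m * q := by rw [← mul_assoc, hm, ← pow_succ', hm_succ]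
  have hf_pow : f (p * m, m * q) = f' (p * m, m * q) ^ k := by
    rw [hf]; exact BlockProd.pow_snd_of_mul_fst_eq hp hq k
  refine ⟨hf_pow, ?_⟩
  rw [← hf_pow]
  exact BlockProd.isIdempotentElem_snd_apply hidem (by simp only [mul_assoc, hm_idem.eq])
    (by simp only [← mul_assoc, hm_idem.eq])
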